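/- Let X be a connected simple graph, equipped with the shortest-path metric d on its vertex set. Suppose that for every ordered pair of distinct vertices a, b of X there is given a connected subgraph A(a,b) of X containing both a and b, and suppose there exists a constant D > 0 such that: (i) whenever a and b are joined by an edge of X, the subgraph A(a,b) has diameter at most D in the metric d; and (ii) for every triple a, b, c of vertices of X, every vertex of A(a,c) lies within distance D of the union of the vertex sets of A(a,b) and A(b,c). Then X is Gromov hyperbolic, with a hyperbolicity constant δ depending only on D; that is, there exists δ = δ(D) > 0 such that for every triple of vertices x, y, z of X and every choice of shortest-path walks p from x to y, q from y to z, and r from x to z, every vertex on p lies within distance δ of the union of the vertices on q and the vertices on r. -/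

import Mathlib

/-!
Bisecting a geodesic and using slimness at the midpoint shows that `A a b` lies within
`D * (k + 1)` of every geodesic from `a` to `b` of length at most `2 ^ k`.

For a bound independent of the length, induct on the length of the geodesic `p`. Let `z = p t`
be a vertex of `p` closest to `v ∈ A a b`; slimness at the second vertex of `p` gives the a priori
bound `d v z ≤ D + K`. Slimness at `p (t - f)` and then at `p (t + f)` puts `v` within `2 * D` of
`A (p (t - f)) (p (t + f))`: the other alternatives would, by induction, bring `v` close to a part
of `p` at distance at least `f` from `z`. The logarithmic bound on this piece of length `2 * f`
now bounds `d v z`, and since `K` and `f` grow linearly in `L` while the pieces have length up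
to `2 ^ L`, one `L` serves for all geodesics.

Conversely, walking from `a` to `b` inside the connected `A a b` meets every distance from `a`,
so every vertex of `p` is within `2 * K` of `A a b`. In a geodesic triangle a vertex of the side
`p` is thus close to `A x y`, hence by slimness to `A x z ∪ A z y`, hence to `r` or `q`.
-/

namespace SimpleGraph.Walk

variable {V : Type*} {G : SimpleGraph V} {u v w : V}

lemma ne_of_length_eq_dist_of_pos {p : G.Walk u v} (hp : p.length = G.dist u v)
    (hpos : 0 < p.length) : u ≠ v := by
  rintro rfl
  simp only [dist_self] at hp
  omega

lemma dist_getVert_getVert_of_length_eq_dist {p : G.Walk u v} (hp : p.length = G.dist u v)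
    {i j : ℕ} (hij : i ≤ j) (hj : j ≤ p.length) :
    G.dist (p.getVert i) (p.getVert j) = j - i := by
  have h := length_eq_dist_of_subwalk hp
    (((p.drop i).isSubwalk_take (j - i)).trans (p.isSubwalk_drop i))
  rw [take_length, drop_length, drop_getVert, Nat.add_sub_cancel' hij] at h
  omega

lemma dist_start_getVert_of_length_eq_dist {p : G.Walk u v} (hp : p.length = G.dist u v)
    {i : ℕ} (hi : i ≤ p.length) : G.dist u (p.getVert i) = i := by
  rw [← length_eq_dist_of_subwalk hp (p.isSubwalk_take i), take_length, min_eq_left hi]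

lemma dist_getVert_end_of_length_eq_dist {p : G.Walk u v} (hp : p.length = G.dist u v)
    (i : ℕ) : G.dist (p.getVert i) v = p.length - i := by
  rw [← length_eq_dist_of_subwalk hp (p.isSubwalk_drop i), drop_length]

lemma dist_start_le_length_of_mem_support (p : G.Walk u v) (hw : w ∈ p.support) :
    G.dist u w ≤ p.length := by
  classical
  exact (dist_le (p.takeUntil w hw)).trans (p.length_takeUntil_le_length hw)

lemma dist_end_le_length_of_mem_support (p : G.Walk u v) (hw : w ∈ p.support) :
    G.dist w v ≤ p.length := by
  classical
  exact (dist_le (p.dropUntil w hw)).trans (p.length_dropUntil_le_length hw)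

lemma sub_le_dist_of_mem_support_take (hc : G.Connected) {p : G.Walk u v}
    (hp : p.length = G.dist u v) {i t : ℕ} (ht : t ≤ p.length) (hw : w ∈ (p.take i).support) :
    t - i ≤ G.dist w (p.getVert t) := by
  have hut := dist_start_getVert_of_length_eq_dist hp ht
  have huw := dist_start_le_length_of_mem_support _ hw
  have := hc.dist_triangle (u := u) (v := w) (w := p.getVert t)
  simp only [take_length] at huw
  omega

lemma sub_le_dist_of_mem_support_drop (hc : G.Connected) {p : G.Walk u v}
    (hp : p.length = G.dist u v) {j : ℕ} (t : ℕ) (hj : j ≤ p.length)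
    (hw : w ∈ (p.drop j).support) : j - t ≤ G.dist (p.getVert t) w := by
  have htv := dist_getVert_end_of_length_eq_dist hp t
  have hwv := dist_end_le_length_of_mem_support _ hw
  have := hc.dist_triangle (u := p.getVert t) (v := w) (w := v)
  simp only [drop_length] at hwv
  omega

lemma exists_mem_support_forall_dist_le (p : G.Walk u v) (x : V) :
    ∃ z ∈ p.support, ∀ y ∈ p.support, G.dist x z ≤ G.dist x y := by
  classical
  obtain ⟨z, hz, hmin⟩ := p.support.toFinset.exists_min_image (G.dist x) ⟨u, by simp⟩
  exact ⟨z, by simpa using hz, fun y hy => hmin y (by simpa using hy)⟩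

lemma exists_mem_support_dist_eq (x : V) (p : G.Walk u v) {t : ℕ} (hu : G.dist x u ≤ t)
    (hv : t ≤ G.dist x v) : ∃ y ∈ p.support, G.dist x y = t := by
  induction p with
  | nil => exact ⟨_, start_mem_support _, le_antisymm hu hv⟩
  | @cons u u' v h p ih =>
    rcases hu.eq_or_lt with hut | hut
    · exact ⟨u, start_mem_support _, hut⟩
    · have := h.diff_dist_adj (u := x)
      obtain ⟨y, hy, hxy⟩ := ih (by omega) hv
      exact ⟨y, by simp [hy], hxy⟩

end SimpleGraph.Walk

namespace SimpleGraph

variable {V : Type*} {X : SimpleGraph V}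

lemma Subgraph.Connected.exists_walk_support_subset {S : X.Subgraph} (hS : S.Connected)
    {a b : V} (ha : a ∈ S.verts) (hb : b ∈ S.verts) :
    ∃ γ : X.Walk a b, ∀ y ∈ γ.support, y ∈ S.verts := by
  obtain ⟨γ, hγ⟩ := (S.preconnected_iff_forall_exists_walk_subgraph.mp hS.preconnected) ha hb
  exact ⟨γ, fun y hy => hγ.1 (γ.mem_verts_toSubgraph.mpr hy)⟩

variable {a b : V}

def DiamLEOnEdges (A : V → V → X.Subgraph) (D : ℕ) : Prop :=
  ∀ a b, X.Adj a b → ∀ x ∈ (A a b).verts, ∀ y ∈ (A a b).verts, X.dist x y ≤ D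

def SlimTriangles (A : V → V → X.Subgraph) (D : ℕ) : Prop :=
  ∀ a b c, ∀ v ∈ (A a c).verts, ∃ w, (w ∈ (A a b).verts ∨ w ∈ (A b c).verts) ∧ X.dist v w ≤ D

/-- `A a b` lies in the `K`-neighbourhood of every geodesic from `a` to `b` shorter than `n`. -/
def NearGeodesics (A : V → V → X.Subgraph) (K n : ℕ) : Prop :=
  ∀ ⦃a b⦄, a ≠ b → ∀ p : X.Walk a b, p.length = X.dist a b → p.length < n →
    ∀ v ∈ (A a b).verts, ∃ y ∈ p.support, X.dist v y ≤ K

variable {A : V → V → X.Subgraph} {D K n : ℕ}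

namespace NearGeodesics

variable {p : X.Walk a b} {v : V}

lemma mono (h : NearGeodesics A K n) {K' n' : ℕ} (hK : K ≤ K') (hn : n' ≤ n) :
    NearGeodesics A K' n' := fun _ _ hab p hp hpn v hv =>
  (h hab p hp (hpn.trans_le hn) v hv).imp fun _ ⟨hy, hvy⟩ => ⟨hy, hvy.trans hK⟩

lemma take (h : NearGeodesics A K n) (hp : p.length = X.dist a b) {i : ℕ} (hi₀ : 0 < i)
    (hi : i ≤ p.length) (hin : i < n) :
    ∀ w ∈ (A a (p.getVert i)).verts, ∃ y ∈ (p.take i).support, X.dist w y ≤ K := by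
  have hpi := length_eq_dist_of_subwalk hp (p.isSubwalk_take i)
  have hlen : (p.take i).length = i := by simp [hi]
  exact h (Walk.ne_of_length_eq_dist_of_pos hpi (by omega)) _ hpi (by omega)

lemma drop (h : NearGeodesics A K n) (hp : p.length = X.dist a b) {i : ℕ}
    (hi : i < p.length) (hin : p.length - i < n) :
    ∀ w ∈ (A (p.getVert i) b).verts, ∃ y ∈ (p.drop i).support, X.dist w y ≤ K := by
  have hpi := length_eq_dist_of_subwalk hp (p.isSubwalk_drop i)
  have hlen : (p.drop i).length = p.length - i := by simp
  exact h (Walk.ne_of_length_eq_dist_of_pos hpi (by omega)) _ hpi (by omega)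

lemma exists_near_of_split (hc : X.Connected) (hslim : SlimTriangles A D)
    (h : NearGeodesics A K n) (hp : p.length = X.dist a b) {i : ℕ} (hi₀ : 0 < i)
    (hi : i < p.length) (hin : i < n) (hn : p.length - i < n) (hv : v ∈ (A a b).verts) :
    ∃ y ∈ p.support, X.dist v y ≤ D + K := by
  obtain ⟨w, hw, hvw⟩ := hslim a (p.getVert i) b v hv
  obtain ⟨y, hy, hwy⟩ : ∃ y ∈ p.support, X.dist w y ≤ K := by
    rcases hw with hw | hw
    · obtain ⟨y, hy, hwy⟩ := h.take hp hi₀ hi.le hin w hw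
      exact ⟨y, (p.isSubwalk_take i).support_subset hy, hwy⟩
    · obtain ⟨y, hy, hwy⟩ := h.drop hp hi hn w hw
      exact ⟨y, (p.isSubwalk_drop i).support_subset hy, hwy⟩
  exact ⟨y, hy, (hc.dist_triangle (v := w)).trans (by omega)⟩

lemma exists_near_drop_of_far_take (hc : X.Connected) (hslim : SlimTriangles A D)
    (h : NearGeodesics A K n) (hp : p.length = X.dist a b) (hpn : p.length ≤ n) {i : ℕ}
    (hi : i < p.length) (hfar : 0 < i → ∀ y ∈ (p.take i).support, D + K < X.dist v y)
    (hv : v ∈ (A a b).verts) : ∃ w ∈ (A (p.getVert i) b).verts, X.dist v w ≤ D := by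
  rcases i.eq_zero_or_pos with rfl | hi₀
  · exact ⟨v, by rwa [p.getVert_zero], by simp⟩
  obtain ⟨w, hw | hw, hvw⟩ := hslim a (p.getVert i) b v hv
  · obtain ⟨y, hy, hwy⟩ := h.take hp hi₀ hi.le (by omega) w hw
    have := hfar hi₀ y hy
    have := hc.dist_triangle (u := v) (v := w) (w := y)
    omega
  · exact ⟨w, hw, hvw⟩

lemma exists_near_take_of_far_drop (hc : X.Connected) (hslim : SlimTriangles A D)
    (h : NearGeodesics A K n) (hp : p.length = X.dist a b) (hpn : p.length ≤ n) {j : ℕ}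
    (hj : 0 < j) (hfar : j < p.length → ∀ y ∈ (p.drop j).support, D + K < X.dist v y)
    (hv : v ∈ (A a b).verts) : ∃ w ∈ (A a (p.getVert j)).verts, X.dist v w ≤ D := by
  rcases lt_or_ge j p.length with hjp | hjp
  swap
  · exact ⟨v, by rwa [p.getVert_of_length_le hjp], by simp⟩
  obtain ⟨w, hw | hw, hvw⟩ := hslim a (p.getVert j) b v hv
  · exact ⟨w, hw, hvw⟩
  · obtain ⟨y, hy, hwy⟩ := h.drop hp hjp (by omega) w hw
    have := hfar hjp y hy
    have := hc.dist_triangle (u := v) (v := w) (w := y)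
    omega

end NearGeodesics

theorem nearGeodesics_two_pow (hc : X.Connected) (hmem : ∀ a b, a ≠ b → a ∈ (A a b).verts)
    (hdiam : DiamLEOnEdges A D) (hslim : SlimTriangles A D) (k : ℕ) :
    NearGeodesics A (D * (k + 1)) (2 ^ k + 1) := by
  induction k with
  | zero =>
    intro a b hab p hp hpn v hv
    have hpos : 0 < p.length := Nat.pos_of_ne_zero fun h => hab (Walk.eq_of_length_eq_zero h)
    have hadj : X.Adj a b := by rw [← dist_eq_one_iff_adj]; rw [pow_zero] at hpn; omega
    exact ⟨a, p.start_mem_support, by simpa using hdiam a b hadj v hv a (hmem a b hab)⟩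
  | succ k ih =>
    intro a b hab p hp hpn v hv
    rcases lt_or_ge p.length (2 ^ k + 1) with hpk | hpk
    · exact ih.mono (by gcongr; omega) le_rfl hab p hp hpk v hv
    · rw [pow_succ] at hpn
      obtain ⟨y, hy, hvy⟩ := ih.exists_near_of_split hc hslim hp (i := 2 ^ k) (by positivity)
        (by omega) (by omega) (by omega) hv
      exact ⟨y, hy, hvy.trans_eq (by ring)⟩

theorem NearGeodesics.exists_near_of_two_pow_lt (hc : X.Connected)
    (hmem : ∀ a b, a ≠ b → a ∈ (A a b).verts) (hdiam : DiamLEOnEdges A D)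
    (hslim : SlimTriangles A D) {L : ℕ} (hL : 2 * (3 * D + 2 * (D * (L + 3)) + 1) ≤ 2 ^ L)
    {p : X.Walk a b} (h : NearGeodesics A (D * (L + 3)) p.length) (hp : p.length = X.dist a b)
    (hlong : 2 ^ L < p.length) {v : V} (hv : v ∈ (A a b).verts) :
    ∃ y ∈ p.support, X.dist v y ≤ D * (L + 3) := by
  generalize hK : D * (L + 3) = K at h hL ⊢
  -- with `hs` below, `f > d v z + 2 * D + K`, which gives the two `hfar` conditions
  obtain ⟨f, hf⟩ : ∃ f, f = 3 * D + 2 * K + 1 := ⟨_, rfl⟩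
  have h1L : 1 ≤ 2 ^ L := Nat.one_le_two_pow
  obtain ⟨z, hz, hzmin⟩ := p.exists_mem_support_forall_dist_le v
  obtain ⟨t, rfl, ht⟩ := Walk.mem_support_iff_exists_getVert.mp hz
  have hs : X.dist v (p.getVert t) ≤ D + K := by
    obtain ⟨y, hy, hvy⟩ := h.exists_near_of_split hc hslim hp (i := 1) one_pos (by omega)
      (by omega) (by omega) hv
    exact (hzmin y hy).trans hvy
  obtain ⟨w₁, hw₁, hvw₁⟩ := h.exists_near_drop_of_far_take hc hslim hp le_rfl (i := t - f)
    (by omega) (fun _ y hy => by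
      have := Walk.sub_le_dist_of_mem_support_take hc hp ht hy
      have := hc.dist_triangle (u := y) (v := v) (w := p.getVert t)
      have : X.dist y v = X.dist v y := dist_comm
      omega) hv
  set q := p.drop (t - f)
  have hq := length_eq_dist_of_subwalk hp (p.isSubwalk_drop (t - f))
  obtain ⟨w₂, hw₂, hw₁w₂⟩ := h.exists_near_take_of_far_drop hc hslim hq (by simp)
    (j := t + f - (t - f)) (by omega) (fun hj y hy => by
      rw [Walk.drop_drop, Walk.support_copy] at hy
      simp only [Walk.drop_length] at hj
      have := Walk.sub_le_dist_of_mem_support_drop hc hp t (by omega) hy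
      have := hc.dist_triangle (u := p.getVert t) (v := v) (w := y)
      have := hc.dist_triangle (u := v) (v := w₁) (w := y)
      have : X.dist (p.getVert t) v = X.dist v (p.getVert t) := dist_comm
      omega) hw₁
  have hmid := length_eq_dist_of_subwalk hq (q.isSubwalk_take (t + f - (t - f)))
  have hmid_len : (q.take (t + f - (t - f))).length ≤ 2 ^ L := by
    simp only [Walk.take_length]; omega
  have hmid_pos : 0 < (q.take (t + f - (t - f))).length := by
    simp only [q, Walk.take_length, Walk.drop_length]; omega
  obtain ⟨y, hy, hw₂y⟩ := nearGeodesics_two_pow hc hmem hdiam hslim L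
    (Walk.ne_of_length_eq_dist_of_pos hmid hmid_pos) _ hmid (by omega) w₂ hw₂
  refine ⟨p.getVert t, hz, (hzmin y ?_).trans ?_⟩
  · exact ((q.isSubwalk_take _).trans (p.isSubwalk_drop _)).support_subset hy
  · have := hc.dist_triangle (u := v) (v := w₁) (w := y)
    have := hc.dist_triangle (u := w₁) (v := w₂) (w := y)
    have : D * (L + 1) + 2 * D = K := by rw [← hK]; ring
    omega

theorem nearGeodesics (hc : X.Connected) (hmem : ∀ a b, a ≠ b → a ∈ (A a b).verts)
    (hdiam : DiamLEOnEdges A D) (hslim : SlimTriangles A D) {L : ℕ}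
    (hL : 2 * (3 * D + 2 * (D * (L + 3)) + 1) ≤ 2 ^ L) (n : ℕ) :
    NearGeodesics A (D * (L + 3)) n := by
  induction n with
  | zero => intro _ _ _ _ _ hp; omega
  | succ n ih =>
    intro a b hab p hp hpn v hv
    rcases (Nat.lt_succ_iff.mp hpn).lt_or_eq with hpn | rfl
    · exact ih hab p hp hpn v hv
    rcases le_or_gt p.length (2 ^ L) with hshort | hlong
    · exact (nearGeodesics_two_pow hc hmem hdiam hslim L).mono (by gcongr; omega) le_rfl
        hab p hp (by omega) v hv
    · exact ih.exists_near_of_two_pow_lt hc hmem hdiam hslim hL hp hlong hv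

lemma exists_mem_verts_dist_le_of_near (hc : X.Connected) {S : X.Subgraph} (hS : S.Connected)
    (ha : a ∈ S.verts) (hb : b ∈ S.verts) {p : X.Walk a b} (hp : p.length = X.dist a b)
    (hnear : ∀ v ∈ S.verts, ∃ y ∈ p.support, X.dist v y ≤ K) {x : V} (hx : x ∈ p.support) :
    ∃ u ∈ S.verts, X.dist x u ≤ 2 * K := by
  obtain ⟨γ, hγ⟩ := hS.exists_walk_support_subset ha hb
  obtain ⟨t, rfl, ht⟩ := Walk.mem_support_iff_exists_getVert.mp hx
  obtain ⟨u, hu, hau⟩ := γ.exists_mem_support_dist_eq a (t := t) (by simp) (by omega)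
  obtain ⟨w, hw, huw⟩ := hnear u (hγ u hu)
  obtain ⟨j, rfl, hj⟩ := Walk.mem_support_iff_exists_getVert.mp hw
  have haj := Walk.dist_start_getVert_of_length_eq_dist hp hj
  have := hc.dist_triangle (u := a) (v := u) (w := p.getVert j)
  have := hc.dist_triangle (u := a) (v := p.getVert j) (w := u)
  have : X.dist (p.getVert j) u = X.dist u (p.getVert j) := dist_comm
  have hxw : X.dist (p.getVert t) (p.getVert j) ≤ K := by
    rcases le_total t j with htj | hjt
    · rw [Walk.dist_getVert_getVert_of_length_eq_dist hp htj hj]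
      omega
    · rw [dist_comm, Walk.dist_getVert_getVert_of_length_eq_dist hp hjt ht]
      omega
  exact ⟨u, hγ u hu, (hc.dist_triangle (v := p.getVert j)).trans (by omega)⟩

lemma exists_near_sides_of_mem (hc : X.Connected) (hslim : SlimTriangles A D)
    (hnear : ∀ n, NearGeodesics A K n) {x y z : V} (hxy : x ≠ y) {q : X.Walk y z}
    {r : X.Walk x z} (hq : q.length = X.dist y z) (hr : r.length = X.dist x z) {u : V}
    (hu : u ∈ (A x y).verts) : ∃ w, (w ∈ q.support ∨ w ∈ r.support) ∧ X.dist u w ≤ D + K := by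
  have near_r (hxz : x ≠ z) : ∀ u ∈ (A x z).verts, ∃ w ∈ r.support, X.dist u w ≤ K :=
    hnear _ hxz r hr (lt_add_one _)
  have near_q (hzy : z ≠ y) : ∀ u ∈ (A z y).verts, ∃ w ∈ q.support, X.dist u w ≤ K := by
    intro u hu
    obtain ⟨w, hw, huw⟩ := hnear _ hzy q.reverse (by rw [Walk.length_reverse, hq, dist_comm])
      (lt_add_one _) u hu
    exact ⟨w, by simpa using hw, huw⟩
  rcases eq_or_ne x z with rfl | hxz
  · obtain ⟨w, hw, huw⟩ := near_q hxy u hu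
    exact ⟨w, .inl hw, by omega⟩
  rcases eq_or_ne z y with rfl | hzy
  · obtain ⟨w, hw, huw⟩ := near_r hxz u hu
    exact ⟨w, .inr hw, by omega⟩
  obtain ⟨u', hu' | hu', huu'⟩ := hslim x z y u hu
  · obtain ⟨w, hw, hu'w⟩ := near_r hxz u' hu'
    exact ⟨w, .inr hw, (hc.dist_triangle (v := u')).trans (by omega)⟩
  · obtain ⟨w, hw, hu'w⟩ := near_q hzy u' hu'
    exact ⟨w, .inl hw, (hc.dist_triangle (v := u')).trans (by omega)⟩

end SimpleGraph

lemma two_mul_add_le_two_pow (D : ℕ) :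
    2 * (3 * D + 2 * (D * (6 * D + 10 + 3)) + 1) ≤ 2 ^ (6 * D + 10) := by
  have hD : D + 1 ≤ 2 ^ D := Nat.lt_two_pow_self
  have h2 : (2 ^ D) ^ 2 ≤ (2 ^ D) ^ 6 := Nat.pow_le_pow_right (Nat.two_pow_pos D) (by norm_num)
  calc 2 * (3 * D + 2 * (D * (6 * D + 10 + 3)) + 1) ≤ 1024 * (D + 1) ^ 2 := by nlinarith
    _ ≤ 1024 * (2 ^ D) ^ 6 := by nlinarith
    _ = 2 ^ (6 * D + 10) := by ring

/-- The hyperbolicity criterion of Masur–Schleimer and Bowditch: if a connected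
simple graph `X` admits, for every ordered pair of distinct vertices `a b`, a
connected subgraph `A a b` containing `a` and `b` such that, for some `D > 0`,
(i) `A a b` has diameter at most `D` whenever `a` and `b` are adjacent, and
(ii) for every triple `a b c`, each vertex of `A a c` is within distance `D` of
`A a b ∪ A b c`, then `X` is Gromov hyperbolic with a constant `δ` depending
only on `D`: in every geodesic triangle, each side lies in the
`δ`-neighborhood of the union of the other two. -/
theorem hyperbolicity_criterion :
    ∀ D : ℕ, 0 < D →
      ∃ δ : ℕ, 0 < δ ∧
        ∀ (V : Type) (X : SimpleGraph V), X.Connected →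
          ∀ A : V → V → X.Subgraph,
            (∀ a b : V, a ≠ b →
              (A a b).Connected ∧ a ∈ (A a b).verts ∧ b ∈ (A a b).verts) →
            (∀ a b : V, X.Adj a b →
              ∀ x ∈ (A a b).verts, ∀ y ∈ (A a b).verts, X.dist x y ≤ D) →
            (∀ a b c : V, ∀ v ∈ (A a c).verts,
              ∃ w : V, (w ∈ (A a b).verts ∨ w ∈ (A b c).verts) ∧ X.dist v w ≤ D) →
            ∀ x y z : V, ∀ (p : X.Walk x y) (q : X.Walk y z) (r : X.Walk x z),
              p.length = X.dist x y → q.length = X.dist y z → r.length = X.dist x z →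
              ∀ v ∈ p.support,
                ∃ w : V, (w ∈ q.support ∨ w ∈ r.support) ∧ X.dist v w ≤ δ := by
  intro D hD
  refine ⟨3 * (D * (6 * D + 10 + 3)) + D, by positivity, ?_⟩
  intro V X hX A hA hdiam hslim x y z p q r hp hq hr v hv
  rcases eq_or_ne x y with rfl | hxy
  · have := p.dist_start_le_length_of_mem_support hv
    rw [hp, SimpleGraph.dist_self] at this
    exact ⟨x, .inr r.start_mem_support, by rw [SimpleGraph.dist_comm]; omega⟩
  have hnear := SimpleGraph.nearGeodesics hX (fun a b hab => (hA a b hab).2.1) hdiam hslim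
    (two_mul_add_le_two_pow D)
  obtain ⟨hAxy, hx, hy⟩ := hA x y hxy
  obtain ⟨u, hu, hvu⟩ := SimpleGraph.exists_mem_verts_dist_le_of_near hX hAxy hx hy hp
    (hnear _ hxy p hp (lt_add_one _)) hv
  obtain ⟨w, hw, huw⟩ := SimpleGraph.exists_near_sides_of_mem hX hslim hnear hxy hq hr hu
  exact ⟨w, hw, (hX.dist_triangle (v := u)).trans (by omega)⟩
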